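/- arXiv:1510.06567 — 3 statements merged into one kernel-verified Lean document; each statement's English description precedes it below -/
import Mathlib

section
/- Let P be a nonempty compact convex subset of ℝⁿ, f, g : ℝⁿ → ℝ convex and differentiable, F = f + g, x ∈ P, and let s be a minimizer over P of the map u ↦ ⟨∇f(x), u − x⟩ + g(u) − g(x). Then ⟨∇F(x), s − x⟩ ≤ 0, i.e., the direction Δx = s − x is a descent direction for F at x. -/
open RealInnerProductSpace

/-- Restricting `f` to the segment `t ↦ x + t • (y - x)` reduces this to the one-dimensional fact
that the derivative of a convex function at `0` is at most its slope over `[0, 1]`. -/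
theorem ConvexOn.apply_sub_le_sub_of_hasFDerivAt {E : Type*} [NormedAddCommGroup E]
    [NormedSpace ℝ E] {s : Set E} {f : E → ℝ} {f' : E →L[ℝ] ℝ} {x y : E}
    (hf : ConvexOn ℝ s f) (hx : x ∈ s) (hy : y ∈ s) (hf' : HasFDerivAt f f' x) :
    f' (y - x) ≤ f y - f x := by
  set L : ℝ →ᵃ[ℝ] E := AffineMap.lineMap x y
  have hφ : ConvexOn ℝ (L ⁻¹' s) (f ∘ L) := hf.comp_affineMap L
  have hφ' : HasDerivAt (f ∘ L) (f' (y - x)) 0 := by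
    have hf'L : HasFDerivAt f f' (L 0) := by simpa [L] using hf'
    exact hf'L.comp_hasDerivAt 0 AffineMap.hasDerivAt_lineMap
  simpa [L, slope_def_field] using
    hφ.le_slope_of_hasDerivAt (by simpa [L] using hx) (by simpa [L] using hy) one_pos hφ'

theorem ConvexOn.inner_gradient_sub_le {E : Type*} [NormedAddCommGroup E]
    [InnerProductSpace ℝ E] [CompleteSpace E] {s : Set E} {f : E → ℝ} {x y : E}
    (hf : ConvexOn ℝ s f) (hx : x ∈ s) (hy : y ∈ s) (hfx : DifferentiableAt ℝ f x) :
    ⟪gradient f x, y - x⟫ ≤ f y - f x := by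
  rw [inner_gradient_left]
  exact hf.apply_sub_le_sub_of_hasFDerivAt hx hy hfx.hasFDerivAt

theorem stmt_4_general (n : ℕ) (P : Set (EuclideanSpace ℝ (Fin n)))
    (f g : EuclideanSpace ℝ (Fin n) → ℝ)
    (hgconv : ConvexOn ℝ Set.univ g)
    (hfdiff : Differentiable ℝ f) (hgdiff : Differentiable ℝ g)
    (x : EuclideanSpace ℝ (Fin n)) (hx : x ∈ P)
    (s : EuclideanSpace ℝ (Fin n))
    (hmin : IsMinOn (fun u => ⟪gradient f x, u - x⟫ + g u - g x) P s) :
    ⟪gradient (fun y => f y + g y) x, s - x⟫ ≤ 0 := by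
  have hmin_x : ⟪gradient f x, s - x⟫ + g s - g x ≤ 0 := by simpa using hmin hx
  have hg : ⟪gradient g x, s - x⟫ ≤ g s - g x :=
    hgconv.inner_gradient_sub_le (Set.mem_univ x) (Set.mem_univ s) (hgdiff x)
  have hsum : ⟪gradient (fun y => f y + g y) x, s - x⟫
      = ⟪gradient f x, s - x⟫ + ⟪gradient g x, s - x⟫ := by
    simp only [inner_gradient_left, fderiv_fun_add (hfdiff x) (hgdiff x),
      add_apply]
  linarith

/-- if `s` minimizes the partially linearized function at `x ∈ P` over `P`,
then `Δx = s - x` is a descent direction for `F = f + g` at `x`: `⟪∇F x, s - x⟫ ≤ 0`. -/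
theorem stmt_4 (n : ℕ) (P : Set (EuclideanSpace ℝ (Fin n)))
    (hPne : P.Nonempty) (hPcpt : IsCompact P) (hPconv : Convex ℝ P)
    (f g : EuclideanSpace ℝ (Fin n) → ℝ)
    (hfconv : ConvexOn ℝ Set.univ f) (hgconv : ConvexOn ℝ Set.univ g)
    (hfdiff : Differentiable ℝ f) (hgdiff : Differentiable ℝ g)
    (x : EuclideanSpace ℝ (Fin n)) (hx : x ∈ P)
    (s : EuclideanSpace ℝ (Fin n)) (hs : s ∈ P)
    (hmin : IsMinOn (fun u => ⟪gradient f x, u - x⟫ + g u - g x) P s) :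
    ⟪gradient (fun y => f y + g y) x, s - x⟫ ≤ 0 :=
  stmt_4_general n P f g hgconv hfdiff hgdiff x hx s hmin
end

section
/- Let P be a nonempty compact convex subset of ℝⁿ, f, g : ℝⁿ → ℝ convex and differentiable, F = f + g, with curvature-type constant C_F ≥ 0, i.e., F((1−α)x + αy) ≤ F(x) + α⟨∇F(x), y − x⟩ + (C_F/2)α² for all x, y ∈ P and α ∈ [0,1]. Let x⋆ ∈ P minimize F over P, set h(x) = F(x) − F(x⋆). Fix x_k ∈ P, let s_k minimize u ↦ ⟨∇f(x_k), u − x_k⟩ + g(u) − g(x_k) over P, let α ∈ [0,1], and set x_{k+1} = x_k + α(s_k − x_k). Then h(x_{k+1}) ≤ (1 − α) h(x_k) + (C_F/2)α². -/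
/-!
Write `F = f + g`. The curvature bound at `x_k` in the direction of `s_k` reduces the claim
to the duality-gap estimate `⟪∇F(x_k), s_k - x_k⟫ ≤ F(x⋆) - F(x_k)`. That estimate follows by
comparing the value of the partially linearized objective at its minimizer `s_k` with its value
at `x⋆`, and using the tangent inequalities of `g` at `x_k` (evaluated at `s_k`) and of `f` at
`x_k` (evaluated at `x⋆`).
-/

open RealInnerProductSpace Set AffineMap

theorem ConvexOn.add_fderiv_sub_le {E : Type*} [NormedAddCommGroup E] [NormedSpace ℝ E]
    {s : Set E} {f : E → ℝ} {f' : E →L[ℝ] ℝ} {x y : E} (hf : ConvexOn ℝ s f) (hx : x ∈ s)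
    (hy : y ∈ s) (hf' : HasFDerivAt f f' x) : f x + f' (y - x) ≤ f y := by
  set φ : ℝ → ℝ := f ∘ lineMap x y
  have hφ : ConvexOn ℝ (Icc 0 1) φ :=
    (hf.comp_affineMap (lineMap x y)).subset (fun _ ht => hf.1.lineMap_mem hx hy ht)
      (convex_Icc 0 1)
  have hφ' : HasDerivAt φ (f' (y - x)) 0 := by
    have hf'₀ : HasFDerivAt f f' (lineMap x y (0 : ℝ)) := by rwa [lineMap_apply_zero]
    exact hf'₀.comp_hasDerivAt (0 : ℝ) hasDerivAt_lineMap
  have hslope := hφ.le_slope_of_hasDerivWithinAt (left_mem_Icc.2 zero_le_one)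
    (right_mem_Icc.2 zero_le_one) zero_lt_one hφ'.hasDerivWithinAt
  simp only [slope_def_field, φ, Function.comp_apply, lineMap_apply_zero, lineMap_apply_one]
    at hslope
  linarith

theorem ConvexOn.add_inner_gradient_sub_le {E : Type*} [NormedAddCommGroup E]
    [InnerProductSpace ℝ E] [CompleteSpace E] {f : E → ℝ} {x y : E} (hf : ConvexOn ℝ univ f)
    (hfx : DifferentiableAt ℝ f x) : f x + ⟪gradient f x, y - x⟫ ≤ f y := by
  simpa only [inner_gradient_left] using
    hf.add_fderiv_sub_le (mem_univ x) (mem_univ y) hfx.hasFDerivAt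

theorem inner_gradient_add_sub_le_of_isMinOn {E : Type*} [NormedAddCommGroup E]
    [InnerProductSpace ℝ E] [CompleteSpace E] {P : Set E} {f g : E → ℝ} {x s y : E}
    (hf : ConvexOn ℝ univ f) (hg : ConvexOn ℝ univ g) (hfx : DifferentiableAt ℝ f x)
    (hgx : DifferentiableAt ℝ g x)
    (hs : IsMinOn (fun u => ⟪gradient f x, u - x⟫ + g u - g x) P s) (hy : y ∈ P) :
    ⟪gradient (fun z => f z + g z) x, s - x⟫ ≤ (f y + g y) - (f x + g x) := by
  have hsplit : ⟪gradient (fun z => f z + g z) x, s - x⟫ =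
      ⟪gradient f x, s - x⟫ + ⟪gradient g x, s - x⟫ := by
    simp only [inner_gradient_left, fderiv_fun_add hfx hgx, add_apply]
  have hsy : ⟪gradient f x, s - x⟫ + g s - g x ≤ ⟪gradient f x, y - x⟫ + g y - g x := hs hy
  have hg_s : g x + ⟪gradient g x, s - x⟫ ≤ g s := hg.add_inner_gradient_sub_le hgx
  have hf_y : f x + ⟪gradient f x, y - x⟫ ≤ f y := hf.add_inner_gradient_sub_le hfx
  linarith

theorem stmt_10_general (n : ℕ) (P : Set (EuclideanSpace ℝ (Fin n)))
    (f g : EuclideanSpace ℝ (Fin n) → ℝ)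
    (hfconv : ConvexOn ℝ Set.univ f) (hgconv : ConvexOn ℝ Set.univ g)
    (hfdiff : Differentiable ℝ f) (hgdiff : Differentiable ℝ g)
    (CF : ℝ)
    (hcurv : ∀ x ∈ P, ∀ y ∈ P, ∀ α ∈ Set.Icc (0 : ℝ) 1,
      f ((1 - α) • x + α • y) + g ((1 - α) • x + α • y) ≤
        f x + g x + α * ⟪gradient (fun z => f z + g z) x, y - x⟫ + CF / 2 * α ^ 2)
    (xstar : EuclideanSpace ℝ (Fin n)) (hxstar : xstar ∈ P)
    (xk : EuclideanSpace ℝ (Fin n)) (hxk : xk ∈ P)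
    (sk : EuclideanSpace ℝ (Fin n)) (hsk : sk ∈ P)
    (hskmin : IsMinOn (fun u => ⟪gradient f xk, u - xk⟫ + g u - g xk) P sk)
    (α : ℝ) (hα : α ∈ Set.Icc (0 : ℝ) 1) :
    (f (xk + α • (sk - xk)) + g (xk + α • (sk - xk))) - (f xstar + g xstar) ≤
      (1 - α) * ((f xk + g xk) - (f xstar + g xstar)) + CF / 2 * α ^ 2 := by
  have hdescent := hcurv xk hxk sk hsk α hα
  have hgap := inner_gradient_add_sub_le_of_isMinOn hfconv hgconv (hfdiff xk) (hgdiff xk)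
    hskmin hxstar
  rw [show xk + α • (sk - xk) = (1 - α) • xk + α • sk by module]
  linarith [mul_le_mul_of_nonneg_left hgap hα.1]

/-- per-iteration decrease: with curvature constant `C_F`, minimizer `x⋆` of
`F = f + g` over `P`, `h x = F x - F x⋆`, `s_k` minimizing the partially linearized map at
`x_k ∈ P`, and `x_{k+1} = x_k + α (s_k - x_k)` with `α ∈ [0,1]`:
`h x_{k+1} ≤ (1 - α) h x_k + (C_F/2) α²`. -/
theorem stmt_10 (n : ℕ) (P : Set (EuclideanSpace ℝ (Fin n)))
    (hPne : P.Nonempty) (hPcpt : IsCompact P) (hPconv : Convex ℝ P)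
    (f g : EuclideanSpace ℝ (Fin n) → ℝ)
    (hfconv : ConvexOn ℝ Set.univ f) (hgconv : ConvexOn ℝ Set.univ g)
    (hfdiff : Differentiable ℝ f) (hgdiff : Differentiable ℝ g)
    (CF : ℝ) (hCF : 0 ≤ CF)
    (hcurv : ∀ x ∈ P, ∀ y ∈ P, ∀ α ∈ Set.Icc (0 : ℝ) 1,
      f ((1 - α) • x + α • y) + g ((1 - α) • x + α • y) ≤
        f x + g x + α * ⟪gradient (fun z => f z + g z) x, y - x⟫ + CF / 2 * α ^ 2)
    (xstar : EuclideanSpace ℝ (Fin n)) (hxstar : xstar ∈ P)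
    (hmin : IsMinOn (fun x => f x + g x) P xstar)
    (xk : EuclideanSpace ℝ (Fin n)) (hxk : xk ∈ P)
    (sk : EuclideanSpace ℝ (Fin n)) (hsk : sk ∈ P)
    (hskmin : IsMinOn (fun u => ⟪gradient f xk, u - xk⟫ + g u - g xk) P sk)
    (α : ℝ) (hα : α ∈ Set.Icc (0 : ℝ) 1) :
    (f (xk + α • (sk - xk)) + g (xk + α • (sk - xk))) - (f xstar + g xstar) ≤
      (1 - α) * ((f xk + g xk) - (f xstar + g xstar)) + CF / 2 * α ^ 2 :=
  stmt_10_general n P f g hfconv hgconv hfdiff hgdiff CF hcurv xstar hxstar xk hxk sk hsk hskmin α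
    hα
end

section
/- Let (h_k)_{k≥0} be a sequence of nonnegative real numbers and C ≥ 0 such that h_{k+1} ≤ (1 − α_k) h_k + (C/2) α_k² for all k ≥ 0, where α_k = 2/(k+2). Then h_k ≤ 2C/(k+2) for all k ≥ 1. -/
/-- induction lemma: nonnegative reals `h_k` with `C ≥ 0` and
`h_{k+1} ≤ (1 - α_k) h_k + (C/2) α_k²`, `α_k = 2/(k+2)`, satisfy `h_k ≤ 2C/(k+2)` for `k ≥ 1`. -/
theorem stmt_11 (h : ℕ → ℝ) (hnn : ∀ k, 0 ≤ h k) (C : ℝ) (hC : 0 ≤ C)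
    (hrec : ∀ k : ℕ, h (k + 1) ≤ (1 - 2 / ((k : ℝ) + 2)) * h k + C / 2 * (2 / ((k : ℝ) + 2)) ^ 2) :
    ∀ k : ℕ, 1 ≤ k → h k ≤ 2 * C / ((k : ℝ) + 2) := by
  intro k hk
  induction k with
  | zero => omega
  | succ n ih =>
    rcases Nat.eq_zero_or_pos n with hn | hn
    · subst hn
      have := hrec 0
      norm_num at this ⊢
      nlinarith [hnn 0, hnn 1]
    · have ihn := ih hn
      have h1 := hrec n
      have hp : (0:ℝ) < (n:ℝ) + 2 := by positivity
      have hmul : (1 - 2 / ((n : ℝ) + 2)) * h n ≤ (1 - 2 / ((n : ℝ) + 2)) * (2 * C / ((n:ℝ)+2)) := by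
        apply mul_le_mul_of_nonneg_left ihn
        have : (2:ℝ) / ((n:ℝ)+2) ≤ 1 := by
          rw [div_le_one hp]; linarith
        linarith
      have key : h (n+1) ≤ 2 * C * ((n:ℝ)+1) / ((n:ℝ)+2)^2 := by
        have := h1.trans (by linarith : (1 - 2 / ((n : ℝ) + 2)) * h n + C / 2 * (2 / ((n : ℝ) + 2)) ^ 2 ≤ (1 - 2 / ((n : ℝ) + 2)) * (2 * C / ((n:ℝ)+2)) + C / 2 * (2 / ((n : ℝ) + 2)) ^ 2)
        calc h (n+1) ≤ _ := this
          _ = 2 * C * ((n:ℝ)+1) / ((n:ℝ)+2)^2 := by field_simp; ring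
      have hfin : 2 * C * ((n:ℝ)+1) / ((n:ℝ)+2)^2 ≤ 2 * C / ((n:ℝ)+3) := by
        rw [div_le_div_iff₀ (by positivity) (by positivity)]
        nlinarith
      push_cast
      calc h (n+1) ≤ _ := key
        _ ≤ 2 * C / ((n:ℝ)+3) := hfin
        _ = 2 * C / ((n:ℝ) + 1 + 2) := by ring_nf
end
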